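/- arXiv:2002.10909 — 3 statements merged into one kernel-verified Lean document; each statement's English description precedes it below -/
import Mathlib

section
/- A submanifold M of a metallic Riemannian manifold (M̄, ḡ, J) is pointwise slant with Wirtinger function θ if and only if T² = (cos²θ)(pT + qI) on each tangent space, where T is the tangential part of J. -/
open scoped InnerProductSpace

/-! On `W` the tangential part `T` is the compression `P_W ∘ J|_W`, a symmetric operator, so
`‖TX‖² = ⟪T²X, X⟫`. Symmetry of `J` and `J² = pJ + qI` give `‖JX‖² = p⟪TX, X⟫ + q‖X‖²` for
`X ∈ W`. Hence the slant condition `‖TX‖² = cos²θ ‖JX‖²` says that the symmetric operators `T²`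
and `cos²θ (pT + qI)` have the same quadratic form on `W`, which by polarization makes them
equal. Clearing the denominator `‖JX‖` is harmless since `J` is injective (`q ≠ 0`), and taking
square roots since `cos θ ≥ 0`. -/

namespace LinearMap

section Compression

variable {𝕜 E : Type*} [RCLike 𝕜] [NormedAddCommGroup E] [InnerProductSpace 𝕜 E]

theorem IsSymmetric.eq_iff_inner_map_self_eq {S T : E →ₗ[𝕜] E} (hS : S.IsSymmetric)
    (hT : T.IsSymmetric) : S = T ↔ ∀ x, ⟪S x, x⟫_𝕜 = ⟪T x, x⟫_𝕜 := by
  simp only [← sub_eq_zero (a := S), ← (hS.sub hT).inner_map_self_eq_zero, sub_apply,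
    inner_sub_left, sub_eq_zero]

noncomputable def compression (J : E →ₗ[𝕜] E) (K : Submodule 𝕜 E) [K.HasOrthogonalProjection] :
    K →ₗ[𝕜] K :=
  K.orthogonalProjectionOnto.toLinearMap ∘ₗ J ∘ₗ K.subtype

variable {J : E →ₗ[𝕜] E} {K : Submodule 𝕜 E} [K.HasOrthogonalProjection]

theorem inner_compression_left (x y : K) : ⟪J.compression K x, y⟫_𝕜 = ⟪J x, y⟫_𝕜 :=
  K.inner_orthogonalProjectionOnto_eq_of_mem_right y (J x)

theorem IsSymmetric.compression (hJ : J.IsSymmetric) : (J.compression K).IsSymmetric :=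
  fun x y => by
    rw [inner_compression_left, hJ, ← inner_conj_symm, ← inner_compression_left, inner_conj_symm]

end Compression

section Metallic

variable {E : Type*} [NormedAddCommGroup E] [InnerProductSpace ℝ E] {J : E →ₗ[ℝ] E} {p q : ℝ}

theorem IsSymmetric.norm_sq_apply_of_comp_self_eq (hJ : J.IsSymmetric)
    (hJ2 : J ∘ₗ J = p • J + q • id) (x : E) : ‖J x‖ ^ 2 = p * ⟪J x, x⟫_ℝ + q * ‖x‖ ^ 2 := by
  rw [← real_inner_self_eq_norm_sq, hJ, ← comp_apply, hJ2, real_inner_comm,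
    ← real_inner_self_eq_norm_sq]
  simp only [add_apply, smul_apply, id_apply, inner_add_left, real_inner_smul_left]

theorem apply_ne_zero_of_comp_self_eq (hq : q ≠ 0) (hJ2 : J ∘ₗ J = p • J + q • id) {x : E}
    (hx : x ≠ 0) : J x ≠ 0 := by
  intro hJx
  have := congr($hJ2 x)
  simp only [comp_apply, hJx, map_zero, add_apply, smul_apply, smul_zero, id_apply,
    zero_add] at this
  exact smul_ne_zero hq hx this.symm

theorem IsSymmetric.compression_comp_self_eq_iff (hJ : J.IsSymmetric)
    (hJ2 : J ∘ₗ J = p • J + q • id) (K : Submodule ℝ E) [K.HasOrthogonalProjection] (c : ℝ) :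
    J.compression K ∘ₗ J.compression K = c ^ 2 • (p • J.compression K + q • id) ↔
      ∀ x : K, ‖J.compression K x‖ ^ 2 = c ^ 2 * ‖J x‖ ^ 2 := by
  have hA := hJ.compression (K := K)
  have hAA : (J.compression K ∘ₗ J.compression K).IsSymmetric := hA.mul_of_commute hA rfl
  rw [hAA.eq_iff_inner_map_self_eq
    ((hA.smul (conj_trivial p)).add (IsSymmetric.id.smul (conj_trivial q))
      |>.smul (conj_trivial (c ^ 2)))]
  refine forall_congr' fun x => ?_
  rw [comp_apply, hA, real_inner_self_eq_norm_sq, hJ.norm_sq_apply_of_comp_self_eq hJ2,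
    ← inner_compression_left]
  simp only [smul_apply, add_apply, id_apply, real_inner_smul_left, inner_add_left,
    real_inner_self_eq_norm_sq, Submodule.coe_norm]

end Metallic

end LinearMap

theorem pointwise_slant_characterization_general
    (V : Type*) [NormedAddCommGroup V] [InnerProductSpace ℝ V] [FiniteDimensional ℝ V]
    (W : Submodule ℝ V) (J : V →ₗ[ℝ] V) (p q : ℝ) (hq : 0 < q)
    (hsym : ∀ X Y : V, ⟪J X, Y⟫_ℝ = ⟪X, J Y⟫_ℝ)
    (hJ2 : J ∘ₗ J = p • J + q • (LinearMap.id : V →ₗ[ℝ] V))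
    (T : V → V) (hT : ∀ X, T X = (Submodule.orthogonalProjectionOnto W (J X) : V))
    (θ : ℝ) (hθ : θ ∈ Set.Icc 0 (Real.pi/2)) :
    (∀ X ∈ W, X ≠ 0 → ‖T X‖ / ‖J X‖ = Real.cos θ) ↔
      (∀ X ∈ W, T (T X) = Real.cos θ ^ 2 • (p • T X + q • X)) := by
  set A := J.compression W
  have hTA (x : W) : T x = A x := hT x
  have hTTA (x : W) : T (T x) = A (A x) := by rw [hTA, hTA]
  have hcos : 0 ≤ Real.cos θ :=
    Real.cos_nonneg_of_mem_Icc ⟨by linarith [hθ.1, Real.pi_pos], hθ.2⟩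
  calc (∀ X ∈ W, X ≠ 0 → ‖T X‖ / ‖J X‖ = Real.cos θ)
      ↔ ∀ x : W, ‖A x‖ ^ 2 = Real.cos θ ^ 2 * ‖J x‖ ^ 2 := by
        rw [Subtype.forall]
        refine forall₂_congr fun X hX => ?_
        rcases eq_or_ne X 0 with rfl | hX0
        · exact iff_of_true (absurd rfl) (by rw [show (⟨0, hX⟩ : W) = 0 from rfl]; simp)
        have hJX : ‖J X‖ ≠ 0 :=
          norm_ne_zero_iff.mpr (J.apply_ne_zero_of_comp_self_eq hq.ne' hJ2 hX0)
        rw [imp_iff_right hX0, div_eq_iff hJX, hTA ⟨X, hX⟩, ← Submodule.coe_norm,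
          ← mul_pow, sq_eq_sq₀ (norm_nonneg _) (mul_nonneg hcos (norm_nonneg _))]
    _ ↔ A ∘ₗ A = Real.cos θ ^ 2 • (p • A + q • LinearMap.id) :=
        (LinearMap.IsSymmetric.compression_comp_self_eq_iff hsym hJ2 W _).symm
    _ ↔ ∀ X ∈ W, T (T X) = Real.cos θ ^ 2 • (p • T X + q • X) := by
        rw [LinearMap.ext_iff, Subtype.forall]
        refine forall₂_congr fun X hX => ?_
        rw [Subtype.ext_iff, hTTA ⟨X, hX⟩, hTA ⟨X, hX⟩]
        rfl

/-- A submanifold is pointwise slant with Wirtinger function `θ`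
iff `T² = cos²θ (pT + qI)` on each tangent space. Formalized pointwise: for a
subspace `W` of an inner product space and a self-adjoint `J` with
`J² = pJ + qI`, the condition `‖TX‖/‖JX‖ = cos θ` for all nonzero `X ∈ W`
is equivalent to `T²X = cos²θ (pTX + qX)` for all `X ∈ W`. -/
theorem pointwise_slant_characterization
    (V : Type*) [NormedAddCommGroup V] [InnerProductSpace ℝ V] [FiniteDimensional ℝ V]
    (W : Submodule ℝ V) (J : V →ₗ[ℝ] V) (p q : ℝ) (hp : 0 < p) (hq : 0 < q)
    (hsym : ∀ X Y : V, ⟪J X, Y⟫_ℝ = ⟪X, J Y⟫_ℝ)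
    (hJ2 : J ∘ₗ J = p • J + q • (LinearMap.id : V →ₗ[ℝ] V))
    (T : V → V) (hT : ∀ X, T X = (Submodule.orthogonalProjectionOnto W (J X) : V))
    (θ : ℝ) (hθ : θ ∈ Set.Icc 0 (Real.pi/2)) :
    (∀ X ∈ W, X ≠ 0 → ‖T X‖ / ‖J X‖ = Real.cos θ) ↔
      (∀ X ∈ W, T (T X) = Real.cos θ ^ 2 • (p • T X + q • X)) :=
  pointwise_slant_characterization_general V W J p q hq hsym hJ2 T hT θ hθ
end

section
/- If M is a pointwise slant submanifold of a metallic Riemannian manifold with Wirtinger angle θ, i.e. T² = cos²θ (pT + qI) on the tangent space, then ḡ(NX, NY) = sin²θ [p·ḡ(TX, Y) + q·ḡ(X, Y)] for all tangent vectors X, Y. -/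
/-!
The symmetry of `J` and `J² = pJ + q` give `⟪JX, JY⟫ = p⟪TX, Y⟫ + q⟪X, Y⟫`, and the orthogonal
splitting `JX = TX + NX` gives `⟪NX, NY⟫ = ⟪JX, JY⟫ - ⟪TX, TY⟫`. Since `T` is symmetric on `W`,
`⟪TX, TY⟫ = ⟪X, T²Y⟫`, which the slant condition evaluates to `cos²θ (p⟪TX, Y⟫ + q⟪X, Y⟫)`.
-/

open scoped InnerProductSpace

namespace Submodule

variable {𝕜 E : Type*} [RCLike 𝕜] [NormedAddCommGroup E] [InnerProductSpace 𝕜 E]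
  (K : Submodule 𝕜 E) [K.HasOrthogonalProjection]

theorem inner_starProjection_left_of_mem {u v : E} (hv : v ∈ K) :
    ⟪K.starProjection u, v⟫_𝕜 = ⟪u, v⟫_𝕜 := by
  rw [inner_starProjection_left_eq_right, K.starProjection_eq_self_iff.mpr hv]

theorem inner_starProjection_right_of_mem {u v : E} (hu : u ∈ K) :
    ⟪u, K.starProjection v⟫_𝕜 = ⟪u, v⟫_𝕜 := by
  rw [← inner_starProjection_left_eq_right, K.starProjection_eq_self_iff.mpr hu]

theorem inner_starProjection_add_inner_starProjection_orthogonal (u v : E) :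
    ⟪K.starProjection u, K.starProjection v⟫_𝕜 + ⟪Kᗮ.starProjection u, Kᗮ.starProjection v⟫_𝕜
      = ⟪u, v⟫_𝕜 := by
  rw [K.inner_starProjection_left_of_mem (K.starProjection_apply_mem v),
    Kᗮ.inner_starProjection_left_of_mem (Kᗮ.starProjection_apply_mem v), ← inner_add_right,
    starProjection_add_starProjection_orthogonal]

end Submodule

namespace LinearMap.IsSymmetric

variable {𝕜 E : Type*} [RCLike 𝕜] [NormedAddCommGroup E] [InnerProductSpace 𝕜 E]
  {J : E →ₗ[𝕜] E}

theorem inner_starProjection_map_of_mem (hJ : J.IsSymmetric) (K : Submodule 𝕜 E)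
    [K.HasOrthogonalProjection] {u v : E} (hu : u ∈ K) (hv : v ∈ K) :
    ⟪K.starProjection (J u), v⟫_𝕜 = ⟪u, K.starProjection (J v)⟫_𝕜 := by
  rw [K.inner_starProjection_left_of_mem hv, K.inner_starProjection_right_of_mem hu, hJ]

end LinearMap.IsSymmetric

theorem LinearMap.IsSymmetric.inner_map_map_of_comp_self_eq {E : Type*} [NormedAddCommGroup E]
    [InnerProductSpace ℝ E] {J : E →ₗ[ℝ] E} (hJ : J.IsSymmetric) {p q : ℝ}
    (hJ2 : J ∘ₗ J = p • J + q • LinearMap.id) (u v : E) :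
    ⟪J u, J v⟫_ℝ = p * ⟪J u, v⟫_ℝ + q * ⟪u, v⟫_ℝ := by
  rw [← hJ, ← LinearMap.comp_apply, hJ2]
  simp only [LinearMap.add_apply, LinearMap.smul_apply, LinearMap.id_apply, inner_add_left,
    real_inner_smul_left]

theorem pointwise_slant_normal_inner_general
    (V : Type*) [NormedAddCommGroup V] [InnerProductSpace ℝ V] [FiniteDimensional ℝ V]
    (W : Submodule ℝ V) (J : V →ₗ[ℝ] V) (p q : ℝ)
    (hsym : ∀ X Y : V, ⟪J X, Y⟫_ℝ = ⟪X, J Y⟫_ℝ)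
    (hJ2 : J ∘ₗ J = p • J + q • (LinearMap.id : V →ₗ[ℝ] V))
    (T : V → V) (N : V → V)
    (hT : ∀ X, T X = (Submodule.orthogonalProjectionOnto W (J X) : V))
    (hN : ∀ X, N X = (Submodule.orthogonalProjectionOnto Wᗮ (J X) : V))
    (θ : ℝ)
    (hslant : ∀ X ∈ W, T (T X) = Real.cos θ ^ 2 • (p • T X + q • X)) :
    ∀ X ∈ W, ∀ Y ∈ W,
      ⟪N X, N Y⟫_ℝ = Real.sin θ ^ 2 * (p * ⟪T X, Y⟫_ℝ + q * ⟪X, Y⟫_ℝ) := by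
  intro X hX Y hY
  have hJ : J.IsSymmetric := hsym
  simp only [← Submodule.starProjection_apply] at hT hN
  have hT_symm : ∀ Z ∈ W, ⟪T X, Z⟫_ℝ = ⟪X, T Z⟫_ℝ := fun Z hZ => by
    simpa only [hT] using hJ.inner_starProjection_map_of_mem W hX hZ
  have hTT : ⟪T X, T Y⟫_ℝ = Real.cos θ ^ 2 * (p * ⟪T X, Y⟫_ℝ + q * ⟪X, Y⟫_ℝ) := by
    rw [hT_symm _ (hT Y ▸ W.starProjection_apply_mem _), hslant Y hY, hT_symm Y hY,
      real_inner_smul_right, inner_add_right, real_inner_smul_right, real_inner_smul_right]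
  have hJJ : ⟪J X, J Y⟫_ℝ = p * ⟪T X, Y⟫_ℝ + q * ⟪X, Y⟫_ℝ := by
    rw [hJ.inner_map_map_of_comp_self_eq hJ2, hT, W.inner_starProjection_left_of_mem hY]
  calc ⟪N X, N Y⟫_ℝ = ⟪J X, J Y⟫_ℝ - ⟪T X, T Y⟫_ℝ := by
        rw [hN, hN, hT, hT, ← W.inner_starProjection_add_inner_starProjection_orthogonal (J X)]
        ring
    _ = Real.sin θ ^ 2 * (p * ⟪T X, Y⟫_ℝ + q * ⟪X, Y⟫_ℝ) := by
        rw [hJJ, hTT, Real.sin_sq]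
        ring

/-- If `M` is pointwise slant with Wirtinger angle `θ`
(`T² = cos²θ (pT + qI)`), then `ḡ(NX,NY) = sin²θ [p ḡ(TX,Y) + q ḡ(X,Y)]`. -/
theorem pointwise_slant_normal_inner
    (V : Type*) [NormedAddCommGroup V] [InnerProductSpace ℝ V] [FiniteDimensional ℝ V]
    (W : Submodule ℝ V) (J : V →ₗ[ℝ] V) (p q : ℝ) (hp : 0 < p) (hq : 0 < q)
    (hsym : ∀ X Y : V, ⟪J X, Y⟫_ℝ = ⟪X, J Y⟫_ℝ)
    (hJ2 : J ∘ₗ J = p • J + q • (LinearMap.id : V →ₗ[ℝ] V))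
    (T : V → V) (N : V → V)
    (hT : ∀ X, T X = (Submodule.orthogonalProjectionOnto W (J X) : V))
    (hN : ∀ X, N X = (Submodule.orthogonalProjectionOnto Wᗮ (J X) : V))
    (θ : ℝ)
    (hslant : ∀ X ∈ W, T (T X) = Real.cos θ ^ 2 • (p • T X + q • X)) :
    ∀ X ∈ W, ∀ Y ∈ W,
      ⟪N X, N Y⟫_ℝ = Real.sin θ ^ 2 * (p * ⟪T X, Y⟫_ℝ + q * ⟪X, Y⟫_ℝ) :=
  pointwise_slant_normal_inner_general V W J p q hsym hJ2 T N hT hN θ hslant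
end

section
/- If M is a pointwise slant submanifold of a metallic Riemannian manifold with Wirtinger angle θ (so T² = cos²θ (pT + qI)), then tNX = sin²θ (pTX + qX) for every tangent vector X, where t is the tangential part of J on the normal bundle. -/
open scoped InnerProductSpace

/-- In the notation `T`, `N`, `t` of the tangential and normal parts of `J`, this is
`tN = pT + qI - T²` on `K`. -/
theorem Submodule.starProjection_map_starProjection_orthogonal {𝕜 E : Type*} [RCLike 𝕜]
    [NormedAddCommGroup E] [InnerProductSpace 𝕜 E] (K : Submodule 𝕜 E) [K.HasOrthogonalProjection]
    {J : E →ₗ[𝕜] E} {p q : 𝕜} (hJ : J ∘ₗ J = p • J + q • LinearMap.id) {x : E} (hx : x ∈ K) :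
    K.starProjection (J (Kᗮ.starProjection (J x))) =
      p • K.starProjection (J x) + q • x - K.starProjection (J (K.starProjection (J x))) := by
  have hJJ : J (K.starProjection (J x)) + J (Kᗮ.starProjection (J x)) = p • J x + q • x := by
    rw [← map_add, K.starProjection_add_starProjection_orthogonal]
    exact LinearMap.congr_fun hJ x
  have hproj := congrArg K.starProjection hJJ
  rw [map_add, map_add, map_smul, map_smul, K.starProjection_eq_self_iff.2 hx] at hproj
  exact eq_sub_of_add_eq' hproj

theorem pointwise_slant_tN_general
    (V : Type*) [NormedAddCommGroup V] [InnerProductSpace ℝ V] [FiniteDimensional ℝ V]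
    (W : Submodule ℝ V) (J : V →ₗ[ℝ] V) (p q : ℝ)
    (hJ2 : J ∘ₗ J = p • J + q • (LinearMap.id : V →ₗ[ℝ] V))
    (T : V → V) (N : V → V) (t : V → V)
    (hT : ∀ X, T X = (Submodule.orthogonalProjection W (J X) : V))
    (hN : ∀ X, N X = (Submodule.orthogonalProjection Wᗮ (J X) : V))
    (ht : ∀ U, t U = (Submodule.orthogonalProjection W (J U) : V))
    (θ : ℝ)
    (hslant : ∀ X ∈ W, T (T X) = Real.cos θ ^ 2 • (p • T X + q • X)) :
    ∀ X ∈ W, t (N X) = Real.sin θ ^ 2 • (p • T X + q • X) := by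
  intro X hX
  have htN : t (N X) = p • T X + q • X - T (T X) := by
    simp only [ht, hN, hT]
    exact W.starProjection_map_starProjection_orthogonal hJ2 hX
  rw [htN, hslant X hX, Real.sin_sq]
  module

/-- If `M` is pointwise slant with Wirtinger angle `θ`
(`T² = cos²θ (pT + qI)`), then `tNX = sin²θ (pTX + qX)` for every tangent `X`. -/
theorem pointwise_slant_tN
    (V : Type*) [NormedAddCommGroup V] [InnerProductSpace ℝ V] [FiniteDimensional ℝ V]
    (W : Submodule ℝ V) (J : V →ₗ[ℝ] V) (p q : ℝ) (hp : 0 < p) (hq : 0 < q)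
    (hsym : ∀ X Y : V, ⟪J X, Y⟫_ℝ = ⟪X, J Y⟫_ℝ)
    (hJ2 : J ∘ₗ J = p • J + q • (LinearMap.id : V →ₗ[ℝ] V))
    (T : V → V) (N : V → V) (t : V → V)
    (hT : ∀ X, T X = (Submodule.orthogonalProjection W (J X) : V))
    (hN : ∀ X, N X = (Submodule.orthogonalProjection Wᗮ (J X) : V))
    (ht : ∀ U, t U = (Submodule.orthogonalProjection W (J U) : V))
    (θ : ℝ)
    (hslant : ∀ X ∈ W, T (T X) = Real.cos θ ^ 2 • (p • T X + q • X)) :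
    ∀ X ∈ W, t (N X) = Real.sin θ ^ 2 • (p • T X + q • X) :=
  pointwise_slant_tN_general V W J p q hJ2 T N t hT hN ht θ hslant
end
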